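/- Let P be a signed poset on [n] containing an element of the form e_i or -e_i for some i. Then the signed order polytope O_P has no interior lattice points, while the signed chain polytope C_P contains the origin as an interior point; in particular O_P and C_P have different Ehrhart polynomials. -/

import Mathlib

/-!
If `σ • e_i ∈ P` with `σ = ±1`, every point of `O_P` satisfies `0 ≤ σ x_i ≤ 1`, so an interior
point has `0 < σ x_i < 1` and is not integral.

Every chain of `P` can be normalised to signs `η_k = ±1` whose consecutive differences
`η_k e_{c_k} - η_{k+1} e_{c_{k+1}}` lie in `P`. Telescoping and antisymmetry show that the signed
elements `η_k e_{c_k}` are distinct, so a chain has at most `2n` elements and the cube of radius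
`1/(2n)` about the origin lies in `C_P`.

For `t = 1`: keeping only the signed-minimal coordinates of a lattice point of `O_P` is injective
(the point is recovered as the upward closure), and lands in the signed antichains, which are
lattice points of `C_P`; the antichain `-σ e_i` is not hit, since `σ x_i ≥ 0` on `O_P`.
-/

open Finset Pointwise

noncomputable section
attribute [local instance] Classical.propDecidable

/-- The `i`-th standard unit vector in `ℝ^n`. -/
def ee (n : ℕ) (i : Fin n) : Fin n → ℝ := fun j => if j = i then 1 else 0

/-- Standard inner product on `ℝ^n`. -/
def dot {n : ℕ} (a x : Fin n → ℝ) : ℝ := ∑ i, a i * x i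

/-- The type-B root system `B_n`. -/
def Bn (n : ℕ) : Set (Fin n → ℝ) :=
  {α | (∃ i : Fin n, α = ee n i ∨ α = -ee n i) ∨
       (∃ i j : Fin n, i < j ∧ (α = ee n i + ee n j ∨ α = -ee n i - ee n j ∨
          α = ee n i - ee n j ∨ α = -ee n i + ee n j))}

/-- The set of positive linear combinations of elements of `S`. -/
def PLC {n : ℕ} (S : Set (Fin n → ℝ)) : Set (Fin n → ℝ) :=
  {β | ∃ (m : ℕ) (c : Fin m → ℝ) (v : Fin m → (Fin n → ℝ)),
     (∀ k, 0 < c k) ∧ (∀ k, v k ∈ S) ∧ β = ∑ k, c k • v k}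

/-- A signed poset on `[n]`: a subset of `B_n` with antisymmetry, closed under
positive linear combinations within `B_n`. -/
def IsSignedPoset {n : ℕ} (P : Set (Fin n → ℝ)) : Prop :=
  P ⊆ Bn n ∧ (∀ α ∈ P, -α ∉ P) ∧ (∀ β ∈ Bn n, β ∈ PLC P → β ∈ P)

/-- The signed order cone `K_P`. -/
def orderCone {n : ℕ} (P : Set (Fin n → ℝ)) : Set (Fin n → ℝ) :=
  {x | ∀ α ∈ P, 0 ≤ dot α x}

/-- The signed order polytope `O_P = K_P ∩ [-1,1]^n`. -/
def orderPolytope {n : ℕ} (P : Set (Fin n → ℝ)) : Set (Fin n → ℝ) :=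
  {x | (∀ α ∈ P, 0 ≤ dot α x) ∧ ∀ i, -1 ≤ x i ∧ x i ≤ 1}

/-- The number of lattice points in the `t`-th dilate of `Q`. -/
def ehrCount {n : ℕ} (Q : Set (Fin n → ℝ)) (t : ℕ) : ℕ :=
  Set.ncard {x : Fin n → ℤ | ∃ q ∈ Q, ∀ i, (x i : ℝ) = (t : ℝ) * q i}

/-- The interior lattice points of the `t`-th dilate of `Q`. -/
def intLatticePts {n : ℕ} (Q : Set (Fin n → ℝ)) (t : ℕ) : Set (Fin n → ℤ) :=
  {x | (fun i => (x i : ℝ)) ∈ interior ((t : ℝ) • Q)}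

/-- The lattice points of the `t`-th dilate of `Q`. -/
def latticePts {n : ℕ} (Q : Set (Fin n → ℝ)) (t : ℕ) : Set (Fin n → ℤ) :=
  {x | (fun i => (x i : ℝ)) ∈ (t : ℝ) • Q}

/-- A lattice polytope `Q` is Gorenstein of index `k` if `(k-1)Q` has no interior
lattice points, `kQ` has exactly one, and `|tQ° ∩ ℤ^n| = |(t-k)Q ∩ ℤ^n|` for `t > k`. -/
def IsGorenstein {n : ℕ} (Q : Set (Fin n → ℝ)) (k : ℕ) : Prop :=
  0 < k ∧ intLatticePts Q (k - 1) = ∅ ∧ (intLatticePts Q k).ncard = 1 ∧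
  ∀ t : ℕ, k < t → (intLatticePts Q t).ncard = (latticePts Q (t - k)).ncard

/-- `(c, s)` is a chain of the signed poset `P`, consisting of `m + 1` elements
`c 0, ..., c m` of `[n]` and signs `s 0, ..., s (m-1)`. -/
def IsSChain {n : ℕ} (P : Set (Fin n → ℝ)) (m : ℕ) (c : Fin (m + 1) → Fin n)
    (s : Fin m → ℝ) : Prop :=
  (∀ i, s i = 1 ∨ s i = -1) ∧
  ∃ α : Fin m → (Fin n → ℝ),
    (∀ i : Fin m, α i ∈ P ∧
      ((s i = 1 ∧ (α i = ee n (c i.castSucc) - ee n (c i.succ) ∨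
                    α i = -(ee n (c i.castSucc) - ee n (c i.succ)))) ∨
       (s i = -1 ∧ (α i = ee n (c i.castSucc) + ee n (c i.succ) ∨
                    α i = -(ee n (c i.castSucc) + ee n (c i.succ)))))) ∧
    (∀ i : Fin m, ∀ h : (i : ℕ) + 1 < m, α i + α ⟨(i : ℕ) + 1, h⟩ ∈ P)

/-- The linear functional `x_{c_1} + s_1 x_{c_2} + s_1 s_2 x_{c_3} + ⋯` of a chain. -/
def chainFun {n m : ℕ} (c : Fin (m + 1) → Fin n) (s : Fin m → ℝ) (x : Fin n → ℝ) : ℝ :=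
  ∑ k : Fin (m + 1),
    (∏ l ∈ Finset.univ.filter (fun l : Fin m => (l : ℕ) < (k : ℕ)), s l) * x (c k)

/-- The signed chain polytope `C_P`. -/
def chainPolytope {n : ℕ} (P : Set (Fin n → ℝ)) : Set (Fin n → ℝ) :=
  {x | ∀ (m : ℕ) (c : Fin (m + 1) → Fin n) (s : Fin m → ℝ), IsSChain P m c s →
        -1 ≤ chainFun c s x ∧ chainFun c s x ≤ 1}

section Vectors

variable {n : ℕ}

@[simp] lemma ee_apply (i j : Fin n) : ee n i j = if j = i then 1 else 0 := rfl

lemma dot_ee (i : Fin n) (x : Fin n → ℝ) : dot (ee n i) x = x i := by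
  simp [dot]

lemma dot_smul (r : ℝ) (a x : Fin n → ℝ) : dot (r • a) x = r * dot a x := by
  simp [dot, Finset.mul_sum, mul_assoc]

lemma dot_sub (a b x : Fin n → ℝ) : dot (a - b) x = dot a x - dot b x := by
  simp [dot, sub_mul]

lemma abs_apply_le_one_of_mem_Bn {β : Fin n → ℝ} (hβ : β ∈ Bn n) (v : Fin n) : |β v| ≤ 1 := by
  rcases hβ with ⟨i, rfl | rfl⟩ | ⟨i, j, hij, rfl | rfl | rfl | rfl⟩ <;>
    simp only [Pi.add_apply, Pi.sub_apply, Pi.neg_apply, ee_apply] <;>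
    split_ifs <;> simp_all

lemma neg_mem_Bn {β : Fin n → ℝ} (hβ : β ∈ Bn n) : -β ∈ Bn n := by
  rcases hβ with ⟨i, rfl | rfl⟩ | ⟨i, j, hij, rfl | rfl | rfl | rfl⟩
  · exact Or.inl ⟨i, Or.inr rfl⟩
  · exact Or.inl ⟨i, Or.inl (neg_neg _)⟩
  · exact Or.inr ⟨i, j, hij, Or.inr (Or.inl (by abel))⟩
  · exact Or.inr ⟨i, j, hij, Or.inl (by abel)⟩
  · exact Or.inr ⟨i, j, hij, Or.inr (Or.inr (Or.inr (by abel)))⟩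
  · exact Or.inr ⟨i, j, hij, Or.inr (Or.inr (Or.inl (by abel)))⟩

lemma smul_ee_sub_smul_ee_mem_Bn {a b : Fin n} (hab : a ≠ b) {p q : ℝ}
    (hp : p = 1 ∨ p = -1) (hq : q = 1 ∨ q = -1) : p • ee n a - q • ee n b ∈ Bn n := by
  wlog hlt : a < b generalizing a b p q
  · have := neg_mem_Bn (this hab.symm hq hp (lt_of_le_of_ne (not_lt.mp hlt) hab.symm))
    rwa [neg_sub] at this
  rcases hp with rfl | rfl <;> rcases hq with rfl | rfl
  · exact Or.inr ⟨a, b, hlt, Or.inr (Or.inr (Or.inl (by simp)))⟩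
  · exact Or.inr ⟨a, b, hlt, Or.inl (by simp)⟩
  · exact Or.inr ⟨a, b, hlt, Or.inr (Or.inl (by simp))⟩
  · exact Or.inr ⟨a, b, hlt, Or.inr (Or.inr (Or.inr (by simp)))⟩

end Vectors

section PositiveCombinations

variable {n : ℕ}

lemma zero_mem_PLC (S : Set (Fin n → ℝ)) : 0 ∈ PLC S :=
  ⟨0, Fin.elim0, Fin.elim0, Fin.rec0, Fin.rec0, by simp⟩

lemma subset_PLC (S : Set (Fin n → ℝ)) : S ⊆ PLC S :=
  fun β hβ => ⟨1, fun _ => 1, fun _ => β, fun _ => one_pos, fun _ => hβ, by simp⟩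

lemma add_mem_PLC {S : Set (Fin n → ℝ)} {β γ : Fin n → ℝ} (hβ : β ∈ PLC S) (hγ : γ ∈ PLC S) :
    β + γ ∈ PLC S := by
  obtain ⟨m, c, v, hc, hv, rfl⟩ := hβ
  obtain ⟨m', c', v', hc', hv', rfl⟩ := hγ
  refine ⟨m + m', Fin.append c c', Fin.append v v', Fin.addCases ?_ ?_, Fin.addCases ?_ ?_, ?_⟩
  all_goals simp [*, Fin.sum_univ_add]

def plcSubmonoid (S : Set (Fin n → ℝ)) : AddSubmonoid (Fin n → ℝ) where
  carrier := PLC S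
  add_mem' := add_mem_PLC
  zero_mem' := zero_mem_PLC S

end PositiveCombinations

lemma AddSubmonoid.sub_mem_of_forall_castSucc_sub_succ_mem {V : Type*} [AddCommGroup V]
    (C : AddSubmonoid V) {m : ℕ} {g : Fin (m + 1) → V}
    (hg : ∀ l : Fin m, g l.castSucc - g l.succ ∈ C) {j k : Fin (m + 1)} (hjk : j ≤ k) :
    g j - g k ∈ C := by
  induction k using Fin.induction with
  | zero => simp [Fin.le_zero_iff.mp hjk, C.zero_mem]
  | succ l ih =>
    rcases eq_or_lt_of_le hjk with rfl | hlt
    · simp [C.zero_mem]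
    · have := C.add_mem (ih (Fin.le_castSucc_iff.mpr hlt)) (hg l)
      rwa [sub_add_sub_cancel] at this

namespace IsSignedPoset

variable {n : ℕ} {P : Set (Fin n → ℝ)}

lemma zero_notMem (hP : IsSignedPoset P) : (0 : Fin n → ℝ) ∉ P :=
  fun h => hP.2.1 0 h (by rwa [neg_zero])

lemma neg_notMem_PLC (hP : IsSignedPoset P) {α : Fin n → ℝ} (hα : α ∈ P) : -α ∉ PLC P :=
  fun h => hP.2.1 α hα (hP.2.2 _ (neg_mem_Bn (hP.1 hα)) h)

lemma add_mem (hP : IsSignedPoset P) {α β : Fin n → ℝ} (hα : α ∈ P) (hβ : β ∈ P)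
    (h : α + β ∈ Bn n) : α + β ∈ P :=
  hP.2.2 _ h (add_mem_PLC (subset_PLC P hα) (subset_PLC P hβ))

end IsSignedPoset

section Chains

variable {n : ℕ} {P : Set (Fin n → ℝ)} {m : ℕ}

def chainCoeff (s : Fin m → ℝ) (k : Fin (m + 1)) : ℝ :=
  ∏ l ∈ Finset.univ.filter (fun l : Fin m => (l : ℕ) < (k : ℕ)), s l

lemma chainFun_eq_sum_chainCoeff (c : Fin (m + 1) → Fin n) (s : Fin m → ℝ) (x : Fin n → ℝ) :
    chainFun c s x = ∑ k, chainCoeff s k * x (c k) := rfl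

lemma chainCoeff_zero (s : Fin m → ℝ) : chainCoeff s 0 = 1 := by
  simp [chainCoeff]

lemma chainCoeff_succ (s : Fin m → ℝ) (l : Fin m) :
    chainCoeff s l.succ = chainCoeff s l.castSucc * s l := by
  have : Finset.univ.filter (fun l' : Fin m => (l' : ℕ) < (l.succ : ℕ)) =
      insert l (Finset.univ.filter (fun l' : Fin m => (l' : ℕ) < (l.castSucc : ℕ))) := by
    ext l'
    simp only [Finset.mem_filter, Finset.mem_univ, true_and, Finset.mem_insert, Fin.ext_iff,
      Fin.val_succ, Fin.val_castSucc]
    omega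
  rw [chainCoeff, this, Finset.prod_insert (by simp), mul_comm]
  rfl

lemma chainCoeff_eq_one_or (s : Fin m → ℝ) (hs : ∀ l, s l = 1 ∨ s l = -1) (k : Fin (m + 1)) :
    chainCoeff s k = 1 ∨ chainCoeff s k = -1 := by
  refine (abs_eq zero_le_one).mp ?_
  rw [chainCoeff, Finset.abs_prod]
  exact Finset.prod_eq_one fun l _ => by rcases hs l with h | h <;> simp [h]

lemma chain_root_eq_smul (hP : IsSignedPoset P) {a b : Fin n} {s : ℝ} {α : Fin n → ℝ} (hα : α ∈ P)
    (h : (s = 1 ∧ (α = ee n a - ee n b ∨ α = -(ee n a - ee n b))) ∨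
      (s = -1 ∧ (α = ee n a + ee n b ∨ α = -(ee n a + ee n b)))) :
    a ≠ b ∧ ∃ ε : ℝ, (ε = 1 ∨ ε = -1) ∧ α = ε • (ee n a - s • ee n b) := by
  refine ⟨?_, ?_⟩
  · rintro rfl
    rcases h with ⟨-, rfl | rfl⟩ | ⟨-, rfl | rfl⟩
    · exact hP.zero_notMem (by simpa using hα)
    · exact hP.zero_notMem (by simpa using hα)
    all_goals have := abs_apply_le_one_of_mem_Bn (hP.1 hα) a; norm_num at this
  · rcases h with ⟨rfl, rfl | rfl⟩ | ⟨rfl, rfl | rfl⟩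
    exacts [⟨1, by simp⟩, ⟨-1, by simp⟩, ⟨1, by simp⟩, ⟨-1, by simp [add_comm]⟩]

lemma sign_eq_of_add_mem_Bn {a b c : Fin n} (hab : a ≠ b) (hbc : b ≠ c) {ε ε' s s' : ℝ}
    (hε : ε = 1 ∨ ε = -1) (hε' : ε' = 1 ∨ ε' = -1) (hs : s = 1 ∨ s = -1)
    (h : ε • (ee n a - s • ee n b) + ε' • (ee n b - s' • ee n c) ∈ Bn n) : ε' = ε * s := by
  -- the `b`-coordinate of the sum is `ε' - ε * s`
  have := abs_apply_le_one_of_mem_Bn h b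
  simp only [Pi.add_apply, Pi.smul_apply, Pi.sub_apply, ee_apply, if_neg hab.symm,
    if_neg hbc, smul_eq_mul] at this
  rcases hε with rfl | rfl <;> rcases hε' with rfl | rfl <;> rcases hs with rfl | rfl <;>
    norm_num at this <;> norm_num

def IsSignedChain (P : Set (Fin n → ℝ)) (c : Fin (m + 1) → Fin n) (η : Fin (m + 1) → ℝ) : Prop :=
  (∀ k, η k = 1 ∨ η k = -1) ∧
    ∀ l : Fin m, η l.castSucc • ee n (c l.castSucc) - η l.succ • ee n (c l.succ) ∈ P

theorem IsSChain.exists_isSignedChain (hP : IsSignedPoset P) {c : Fin (m + 1) → Fin n}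
    {s : Fin m → ℝ} (hcs : IsSChain P m c s) :
    ∃ η, IsSignedChain P c η ∧ ∀ x, chainFun c s x = η 0 * ∑ k, η k * x (c k) := by
  obtain ⟨hs, α, hα, hadj⟩ := hcs
  choose hne ε hε hαε using fun l => chain_root_eq_smul hP (hα l).1 (hα l).2
  have hstep : ∀ (l : Fin m) (h : (l : ℕ) + 1 < m), ε ⟨l + 1, h⟩ = ε l * s l := by
    intro l h
    refine sign_eq_of_add_mem_Bn (s' := s ⟨l + 1, h⟩) (hne l) (hne ⟨l + 1, h⟩) (hε l) (hε _)
      (hs l) ?_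
    have := hP.1 (hadj l h)
    rwa [hαε, hαε] at this
  obtain ⟨ε₀, hε₀, hε₀0⟩ : ∃ ε₀ : ℝ, (ε₀ = 1 ∨ ε₀ = -1) ∧ ∀ h : 0 < m, ε ⟨0, h⟩ = ε₀ := by
    by_cases hm : 0 < m
    exacts [⟨_, hε ⟨0, hm⟩, fun _ => rfl⟩, ⟨1, Or.inl rfl, fun h => absurd h hm⟩]
  set η := fun k => ε₀ * chainCoeff s k with hη
  have hηsucc (l : Fin m) : η l.succ = η l.castSucc * s l := by
    simp only [hη, chainCoeff_succ, mul_assoc]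
  have hεη : ∀ l : Fin m, ε l = η l.castSucc := by
    rintro ⟨l, hl⟩
    induction l with
    | zero => simp [hη, hε₀0, chainCoeff_zero]
    | succ l ih =>
      rw [hstep ⟨l, by omega⟩ hl, ih (by omega), ← hηsucc]
      rfl
  refine ⟨η, ⟨fun k => ?_, fun l => ?_⟩, fun x => ?_⟩
  · rcases hε₀ with rfl | rfl <;> rcases chainCoeff_eq_one_or s hs k with h | h <;> simp [hη, h]
  · convert (hα l).1 using 1
    rw [hαε, hεη, hηsucc, smul_sub, smul_smul]
  · rw [chainFun_eq_sum_chainCoeff, Finset.mul_sum]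
    refine Finset.sum_congr rfl fun k _ => ?_
    have : ε₀ * ε₀ = 1 := by rcases hε₀ with rfl | rfl <;> norm_num
    simp only [hη, chainCoeff_zero]
    linear_combination -(chainCoeff s k * x (c k)) * this

end Chains

namespace IsSignedChain

variable {n m : ℕ} {P : Set (Fin n → ℝ)} {c : Fin (m + 1) → Fin n} {η : Fin (m + 1) → ℝ}

lemma sub_mem_PLC (h : IsSignedChain P c η) {j k : Fin (m + 1)} (hjk : j ≤ k) :
    η j • ee n (c j) - η k • ee n (c k) ∈ PLC P :=
  (plcSubmonoid P).sub_mem_of_forall_castSucc_sub_succ_mem (g := fun k => η k • ee n (c k))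
    (fun l => subset_PLC P (h.2 l)) hjk

lemma smul_ee_ne_of_lt (hP : IsSignedPoset P) (h : IsSignedChain P c η) {j k : Fin (m + 1)}
    (hjk : j < k) : η j • ee n (c j) ≠ η k • ee n (c k) := by
  -- otherwise `-(v_j - v_{j+1}) = v_{j+1} - v_k` would be a positive combination of `P`
  intro heq
  obtain ⟨l, rfl⟩ : ∃ l : Fin m, l.castSucc = j := ⟨⟨j, by omega⟩, rfl⟩
  have hrest := h.sub_mem_PLC (Fin.castSucc_lt_iff_succ_le.mp hjk)
  rw [← heq, ← neg_sub] at hrest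
  exact hP.neg_notMem_PLC (h.2 l) hrest

lemma sub_mem_of_lt (hP : IsSignedPoset P) (h : IsSignedChain P c η) {j k : Fin (m + 1)}
    (hjk : j < k) (hc : c j ≠ c k) : η j • ee n (c j) - η k • ee n (c k) ∈ P :=
  hP.2.2 _ (smul_ee_sub_smul_ee_mem_Bn hc (h.1 j) (h.1 k)) (h.sub_mem_PLC hjk.le)

lemma card_le (hP : IsSignedPoset P) (h : IsSignedChain P c η) : m + 1 ≤ 2 * n := by
  have hinj : Function.Injective fun k => (c k, decide (η k = 1)) := by
    intro j k hjk
    simp only [Prod.mk.injEq, decide_eq_decide] at hjk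
    have hη : η j = η k := by
      rcases h.1 j with hj | hj <;> rcases h.1 k with hk | hk <;> simp_all
    by_contra hne
    rcases lt_or_gt_of_ne hne with hlt | hlt
    · exact h.smul_ee_ne_of_lt hP hlt (by rw [hjk.1, hη])
    · exact h.smul_ee_ne_of_lt hP hlt (by rw [hjk.1, hη])
  simpa [mul_comm] using Fintype.card_le_of_injective _ hinj

end IsSignedChain

lemma abs_chainFun_le {n m : ℕ} {P : Set (Fin n → ℝ)} (hP : IsSignedPoset P)
    {c : Fin (m + 1) → Fin n} {s : Fin m → ℝ} (hcs : IsSChain P m c s) {x : Fin n → ℝ} {M : ℝ}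
    (hM : ∀ v, |x v| ≤ M) : |chainFun c s x| ≤ 2 * n * M := by
  obtain ⟨η, hη, hfun⟩ := hcs.exists_isSignedChain hP
  have habs (k) : |η k| = 1 := by rcases hη.1 k with h | h <;> simp [h]
  calc |chainFun c s x| ≤ ∑ k, |η k * x (c k)| := by
        rw [hfun, abs_mul, habs, one_mul]
        exact Finset.abs_sum_le_sum_abs _ _
    _ ≤ ∑ _k : Fin (m + 1), M := by
        gcongr with k
        rw [abs_mul, habs, one_mul]
        exact hM _
    _ = (m + 1 : ℕ) * M := by simp
    _ ≤ 2 * n * M := by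
        gcongr
        · exact (abs_nonneg _).trans (hM (c 0))
        · exact_mod_cast hη.card_le hP

lemma zero_mem_interior_chainPolytope {n : ℕ} {P : Set (Fin n → ℝ)} (hP : IsSignedPoset P)
    (hn : 0 < n) : (0 : Fin n → ℝ) ∈ interior (chainPolytope P) := by
  have hr : (0 : ℝ) < 1 / (2 * n) := by positivity
  refine mem_interior_iff_mem_nhds.mpr (Filter.mem_of_superset (Metric.closedBall_mem_nhds 0 hr) ?_)
  intro x hx m c s hcs
  have hx' (v : Fin n) : |x v| ≤ 1 / (2 * n) :=
    (norm_le_pi_norm x v).trans (mem_closedBall_zero_iff.mp hx)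
  have := abs_chainFun_le hP hcs hx'
  rw [mul_one_div_cancel (by positivity)] at this
  exact abs_le.mp this

lemma abs_sum_le_one {ι : Type*} [Fintype ι] (τ : ι → ℝ)
    (hτ : ∀ k, τ k = -1 ∨ τ k = 0 ∨ τ k = 1)
    (h : ∀ t : ℝ, (t = 1 ∨ t = -1) → ∀ j k, τ j = t → τ k = t → j = k) :
    |∑ k, τ k| ≤ 1 := by
  have key (t : ℝ) (ht : t = 1 ∨ t = -1) : t * ∑ k, τ k ≤ 1 :=
    calc t * ∑ k, τ k = ∑ k, t * τ k := Finset.mul_sum _ _ _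
      _ ≤ ∑ k, if τ k = t then (1 : ℝ) else 0 := by
          gcongr with k
          rcases ht with rfl | rfl <;> rcases hτ k with hk | hk | hk <;> norm_num [hk]
      _ = (Finset.univ.filter fun k => τ k = t).card := Finset.sum_boole _ _
      _ ≤ 1 := by
          exact_mod_cast Finset.card_le_one.mpr fun a ha b hb =>
            h t ht a b (Finset.mem_filter.mp ha).2 (Finset.mem_filter.mp hb).2
  exact abs_le.mpr ⟨by linarith [key (-1) (Or.inr rfl)], by linarith [key 1 (Or.inl rfl)]⟩

lemma intCast_eq_one_or {x : ℤ} (hx : |x| ≤ 1) (h0 : x ≠ 0) : (x : ℝ) = 1 ∨ (x : ℝ) = -1 := by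
  have := abs_le.mp hx
  rcases (by omega : x = 1 ∨ x = -1) with rfl | rfl <;> simp

section MinimalPart

variable {n : ℕ} {P : Set (Fin n → ℝ)}

def SignedAbove (P : Set (Fin n → ℝ)) (x : Fin n → ℤ) (v w : Fin n) : Prop :=
  (x v : ℝ) • ee n v - (x w : ℝ) • ee n w ∈ P

def IsSignedMin (P : Set (Fin n → ℝ)) (x : Fin n → ℤ) (v : Fin n) : Prop :=
  x v ≠ 0 ∧ ∀ w, x w ≠ 0 → ¬SignedAbove P x v w

/-- The signed analogue of the set of minimal elements of an order filter. -/
def minPart (P : Set (Fin n → ℝ)) (x : Fin n → ℤ) : Fin n → ℤ :=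
  fun v => if IsSignedMin P x v then x v else 0

def IsSignedAntichain (P : Set (Fin n → ℝ)) (y : Fin n → ℤ) : Prop :=
  (∀ v, |y v| ≤ 1) ∧ ∀ v w, y v ≠ 0 → y w ≠ 0 → ¬SignedAbove P y v w

lemma not_signedAbove_self (hP : IsSignedPoset P) (x : Fin n → ℤ) (v : Fin n) :
    ¬SignedAbove P x v v := by
  simpa [SignedAbove] using hP.zero_notMem

lemma SignedAbove.asymm (hP : IsSignedPoset P) {x : Fin n → ℤ} {v w : Fin n}
    (h : SignedAbove P x v w) : ¬SignedAbove P x w v := by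
  rw [SignedAbove, ← neg_sub]
  exact hP.2.1 _ h

lemma SignedAbove.trans (hP : IsSignedPoset P) {x : Fin n → ℤ} (hx : ∀ v, |x v| ≤ 1)
    {u v w : Fin n} (hu : x u ≠ 0) (hw : x w ≠ 0) (h₁ : SignedAbove P x u v)
    (h₂ : SignedAbove P x v w) : SignedAbove P x u w := by
  by_cases huw : u = w
  · subst huw
    exact absurd h₂ (h₁.asymm hP)
  · have hB := smul_ee_sub_smul_ee_mem_Bn huw (intCast_eq_one_or (hx u) hu)
      (intCast_eq_one_or (hx w) hw)
    have := hP.add_mem h₁ h₂ (by rwa [sub_add_sub_cancel])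
    rwa [sub_add_sub_cancel] at this

lemma exists_isSignedMin (hP : IsSignedPoset P) {x : Fin n → ℤ} (hx : ∀ v, |x v| ≤ 1)
    {v : Fin n} (hv : x v ≠ 0) : ∃ w, IsSignedMin P x w ∧ (w = v ∨ SignedAbove P x v w) := by
  let below : Fin n → Fin n → Prop := fun a b => x a ≠ 0 ∧ x b ≠ 0 ∧ SignedAbove P x b a
  have : IsTrans _ below :=
    ⟨fun a b c hab hbc => ⟨hab.1, hbc.2.1, hbc.2.2.trans hP hx hbc.2.1 hab.1 hab.2.2⟩⟩
  have : Std.Irrefl below := ⟨fun a ha => not_signedAbove_self hP x a ha.2.2⟩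
  obtain ⟨w, ⟨hw, hwv⟩, hmin⟩ := (Finite.wellFounded_of_trans_of_irrefl below).has_min
    {w | x w ≠ 0 ∧ (w = v ∨ SignedAbove P x v w)} ⟨v, hv, Or.inl rfl⟩
  refine ⟨w, ⟨hw, fun u hu hwu => hmin u ⟨hu, Or.inr ?_⟩ ⟨hu, hw, hwu⟩⟩, hwv⟩
  rcases hwv with rfl | hvw
  exacts [hwu, hvw.trans hP hx hv hu hwu]

lemma minPart_ne_zero_iff {x : Fin n → ℤ} {v : Fin n} : minPart P x v ≠ 0 ↔ IsSignedMin P x v := by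
  unfold minPart
  split_ifs with h
  exacts [iff_of_true h.1 h, iff_of_false (by simp) h]

lemma minPart_of_isSignedMin {x : Fin n → ℤ} {v : Fin n} (h : IsSignedMin P x v) :
    minPart P x v = x v :=
  if_pos h

lemma isSignedAntichain_minPart {x : Fin n → ℤ} (hx : ∀ v, |x v| ≤ 1) :
    IsSignedAntichain P (minPart P x) := by
  refine ⟨fun v => ?_, fun v w hv hw habove => ?_⟩
  · by_cases h : IsSignedMin P x v <;> simp [minPart, h, hx v]
  · rw [minPart_ne_zero_iff] at hv hw
    rw [SignedAbove, minPart_of_isSignedMin hv, minPart_of_isSignedMin hw] at habove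
    exact hv.2 w hw.1 habove

lemma isSignedAntichain_single (hP : IsSignedPoset P) (i : Fin n) {σ : ℤ} (hσ : |σ| ≤ 1) :
    IsSignedAntichain P (Pi.single i σ) := by
  refine ⟨fun v => ?_, fun v w hv hw => ?_⟩
  · by_cases h : v = i <;> simp [h, hσ]
  · obtain rfl : v = i := by by_contra h; simp [h] at hv
    obtain rfl : w = v := by by_contra h; simp [h] at hw
    exact not_signedAbove_self hP _ w

end MinimalPart

section Transfer

variable {n : ℕ} {P : Set (Fin n → ℝ)}

lemma IsSignedChain.eq_of_isSignedAntichain {m : ℕ} {c : Fin (m + 1) → Fin n}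
    {η : Fin (m + 1) → ℝ} (hP : IsSignedPoset P) (h : IsSignedChain P c η) {y : Fin n → ℤ}
    (hy : IsSignedAntichain P y) {t : ℝ} (ht : t = 1 ∨ t = -1) {j k : Fin (m + 1)}
    (hj : (y (c j) : ℝ) = t * η j) (hk : (y (c k) : ℝ) = t * η k) : j = k := by
  by_contra hne
  wlog hjk : j < k generalizing j k
  · exact this hk hj (Ne.symm hne) (lt_of_le_of_ne (not_lt.mp hjk) (Ne.symm hne))
  have ht0 : t ≠ 0 := by rcases ht with rfl | rfl <;> norm_num
  have hη0 (l) : η l ≠ 0 := by rcases h.1 l with hl | hl <;> simp [hl]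
  by_cases hc : c j = c k
  · have hη : η j = η k := mul_left_cancel₀ ht0 (by rw [← hj, ← hk, hc])
    exact h.smul_ee_ne_of_lt hP hjk (by rw [hc, hη])
  · have hyj : y (c j) ≠ 0 := fun h0 => mul_ne_zero ht0 (hη0 j) (by rw [← hj, h0, Int.cast_zero])
    have hyk : y (c k) ≠ 0 := fun h0 => mul_ne_zero ht0 (hη0 k) (by rw [← hk, h0, Int.cast_zero])
    have hmem := h.sub_mem_of_lt hP hjk hc
    rcases ht with rfl | rfl
    · exact hy.2 _ _ hyj hyk (by rwa [SignedAbove, hj, hk, one_mul, one_mul])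
    · refine hy.2 _ _ hyk hyj ?_
      rw [SignedAbove, hj, hk, neg_one_mul, neg_one_mul, neg_smul, neg_smul, sub_neg_eq_add,
        neg_add_eq_sub]
      exact hmem

theorem IsSignedAntichain.mem_chainPolytope (hP : IsSignedPoset P) {y : Fin n → ℤ}
    (hy : IsSignedAntichain P y) : (fun v => (y v : ℝ)) ∈ chainPolytope P := by
  intro m c s hcs
  obtain ⟨η, hη, hfun⟩ := hcs.exists_isSignedChain hP
  have hyτ (k) : (y (c k) : ℝ) = η k * y (c k) * η k := by
    rcases hη.1 k with h | h <;> simp [h]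
  have hτ (k) : η k * y (c k) = -1 ∨ η k * y (c k) = 0 ∨ η k * y (c k) = 1 := by
    have := abs_le.mp (hy.1 (c k))
    rcases (by omega : y (c k) = -1 ∨ y (c k) = 0 ∨ y (c k) = 1) with h | h | h <;>
      rcases hη.1 k with h' | h' <;> simp [h, h']
  have hsum := abs_sum_le_one _ hτ fun t ht j k hj hk =>
    hη.eq_of_isSignedAntichain hP hy ht (by rw [hyτ, hj]) (by rw [hyτ, hk])
  have h0 : |η 0| = 1 := by rcases hη.1 0 with h | h <;> simp [h]
  rw [hfun]
  exact abs_le.mp (by rwa [abs_mul, h0, one_mul])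

lemma abs_le_one_of_mem_orderPolytope {x : Fin n → ℤ}
    (hx : (fun v => (x v : ℝ)) ∈ orderPolytope P) (v : Fin n) : |x v| ≤ 1 := by
  have : (-1 : ℝ) ≤ x v ∧ (x v : ℝ) ≤ 1 := hx.2 v
  exact abs_le.mpr ⟨by exact_mod_cast this.1, by exact_mod_cast this.2⟩

lemma eq_iff_minPart_of_mem_orderPolytope (hP : IsSignedPoset P) {x : Fin n → ℤ}
    (hx : (fun v => (x v : ℝ)) ∈ orderPolytope P) {ε : ℤ} (hε : ε = 1 ∨ ε = -1) (v : Fin n) :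
    x v = ε ↔ minPart P x v = ε ∨
      ∃ w, minPart P x w ≠ 0 ∧ (ε : ℝ) • ee n v - (minPart P x w : ℝ) • ee n w ∈ P := by
  have hx1 := abs_le_one_of_mem_orderPolytope hx
  have hε0 : ε ≠ 0 := by omega
  constructor
  · intro hv
    obtain ⟨w, hw, rfl | hvw⟩ := exists_isSignedMin hP hx1 (hv ▸ hε0 : x v ≠ 0)
    · exact Or.inl (by rw [minPart_of_isSignedMin hw, hv])
    · refine Or.inr ⟨w, minPart_ne_zero_iff.mpr hw, ?_⟩
      rwa [minPart_of_isSignedMin hw, ← hv]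
  · rintro (h | ⟨w, hw, hmem⟩)
    · rwa [minPart_of_isSignedMin (minPart_ne_zero_iff.mp (h ▸ hε0)) ] at h
    · have hw' := minPart_ne_zero_iff.mp hw
      rw [minPart_of_isSignedMin hw'] at hmem
      have hdot := hx.1 _ hmem
      rw [dot_sub, dot_smul, dot_smul, dot_ee, dot_ee] at hdot
      have hxw : (x w : ℝ) * x w = 1 := by
        rcases intCast_eq_one_or (hx1 w) hw'.1 with h | h <;> rw [h] <;> norm_num
      have : (1 : ℤ) ≤ ε * x v := by exact_mod_cast (by linarith : (1 : ℝ) ≤ ε * x v)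
      have := abs_le.mp (hx1 v)
      rcases hε with rfl | rfl <;> omega

lemma minPart_injOn (hP : IsSignedPoset P) :
    Set.InjOn (minPart P) {x : Fin n → ℤ | (fun v => (x v : ℝ)) ∈ orderPolytope P} := by
  intro x hx x' hx' he
  funext v
  have key (ε : ℤ) (hε : ε = 1 ∨ ε = -1) : x v = ε ↔ x' v = ε := by
    rw [eq_iff_minPart_of_mem_orderPolytope hP hx hε,
      eq_iff_minPart_of_mem_orderPolytope hP hx' hε, he]
  have h₁ := key 1 (Or.inl rfl)
  have h₂ := key (-1) (Or.inr rfl)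
  have := abs_le.mp (abs_le_one_of_mem_orderPolytope hx v)
  have := abs_le.mp (abs_le_one_of_mem_orderPolytope hx' v)
  omega

end Transfer

lemma interior_subset_preimage_Ioo {X : Type*} [TopologicalSpace X] {f : X → ℝ}
    (hf : IsOpenMap f) (hc : Continuous f) {Q : Set X} {a b : ℝ} (hQ : Q ⊆ f ⁻¹' Set.Icc a b) :
    interior Q ⊆ f ⁻¹' Set.Ioo a b :=
  calc interior Q ⊆ interior (f ⁻¹' Set.Icc a b) := interior_mono hQ
    _ = f ⁻¹' Set.Ioo a b := by rw [← hf.preimage_interior_eq_interior_preimage hc, interior_Icc]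

section LatticePoints

variable {n : ℕ} {P : Set (Fin n → ℝ)}

lemma ehrCount_one (Q : Set (Fin n → ℝ)) :
    ehrCount Q 1 = {x : Fin n → ℤ | (fun v => (x v : ℝ)) ∈ Q}.ncard := by
  unfold ehrCount
  congr 1
  ext x
  simp only [Set.mem_ofPred_eq, Nat.cast_one, one_mul]
  exact ⟨fun ⟨q, hq, he⟩ => (funext he : _ = q) ▸ hq, fun hx => ⟨_, hx, fun _ => rfl⟩⟩

lemma abs_le_one_of_mem_chainPolytope {y : Fin n → ℝ} (hy : y ∈ chainPolytope P) (v : Fin n) :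
    |y v| ≤ 1 := by
  have := hy 0 (fun _ => v) Fin.elim0 ⟨Fin.rec0, Fin.elim0, Fin.rec0, fun i => i.elim0⟩
  simpa [chainFun, abs_le] using this

theorem ehrCount_orderPolytope_lt_chainPolytope (hP : IsSignedPoset P) {i : Fin n} {σ : ℤ}
    (hσ : σ = 1 ∨ σ = -1) (hσi : (σ : ℝ) • ee n i ∈ P) :
    ehrCount (orderPolytope P) 1 < ehrCount (chainPolytope P) 1 := by
  rw [ehrCount_one, ehrCount_one]
  set SO := {x : Fin n → ℤ | (fun v => (x v : ℝ)) ∈ orderPolytope P}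
  set SC := {x : Fin n → ℤ | (fun v => (x v : ℝ)) ∈ chainPolytope P}
  have hfin : SC.Finite := by
    refine (Set.finite_Icc (-1 : Fin n → ℤ) 1).subset fun y hy => ?_
    have (v : Fin n) : |y v| ≤ 1 := by exact_mod_cast abs_le_one_of_mem_chainPolytope hy v
    exact ⟨fun v => (abs_le.mp (this v)).1, fun v => (abs_le.mp (this v)).2⟩
  have hmaps : Set.MapsTo (minPart P) SO SC := fun x hx =>
    (isSignedAntichain_minPart (abs_le_one_of_mem_orderPolytope hx)).mem_chainPolytope hP
  have hsingle : Pi.single i (-σ) ∈ SC :=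
    (isSignedAntichain_single hP i (by rcases hσ with rfl | rfl <;> norm_num)).mem_chainPolytope hP
  have hnot : Pi.single i (-σ) ∉ minPart P '' SO := by
    rintro ⟨x, hx, hxσ⟩
    have hi : minPart P x i = -σ := by simp [hxσ]
    have hmin : IsSignedMin P x i := minPart_ne_zero_iff.mp (by rw [hi]; omega)
    have hxi : x i = -σ := by rw [← minPart_of_isSignedMin hmin, hi]
    have hdot := hx.1 _ hσi
    simp only [dot_smul, dot_ee, hxi, Int.cast_neg] at hdot
    rcases hσ with rfl | rfl <;> norm_num at hdot
  calc SO.ncard = (minPart P '' SO).ncard := (minPart_injOn hP).ncard_image.symm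
    _ < SC.ncard := Set.ncard_lt_ncard
        ((Set.ssubset_iff_of_subset hmaps.image_subset).mpr ⟨_, hsingle, hnot⟩) hfin

lemma intCast_notMem_interior_orderPolytope {i : Fin n} {σ : ℤ} (hσ : σ = 1 ∨ σ = -1)
    (hσi : (σ : ℝ) • ee n i ∈ P) (x : Fin n → ℤ) :
    (fun v => (x v : ℝ)) ∉ interior (orderPolytope P) := by
  intro hx
  have hσ0 : (σ : ℝ) ≠ 0 := by rcases hσ with rfl | rfl <;> norm_num
  let f : (Fin n → ℝ) → ℝ := fun y => σ * y i
  have hf : IsOpenMap f := (Homeomorph.mulLeft₀ (σ : ℝ) hσ0).isOpenMap.comp (isOpenMap_eval i)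
  have hQ : orderPolytope P ⊆ f ⁻¹' Set.Icc 0 1 := fun y hy => by
    refine ⟨by simpa [dot_smul, dot_ee] using hy.1 _ hσi, ?_⟩
    rcases hσ with rfl | rfl <;> simp [f] <;> linarith [hy.2 i]
  have hIoo : (0 : ℝ) < σ * x i ∧ (σ : ℝ) * x i < 1 :=
    interior_subset_preimage_Ioo hf (by fun_prop) hQ hx
  have h₁ : (0 : ℤ) < σ * x i := by exact_mod_cast hIoo.1
  have h₂ : σ * x i < 1 := by exact_mod_cast hIoo.2
  omega

end LatticePoints

/-- if `P` contains some `±e_i`, then `O_P` has no interior lattice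
points, while the origin is interior to `C_P`; in particular the Ehrhart polynomials
of `O_P` and `C_P` differ. -/
theorem stmt19 {n : ℕ} (P : Set (Fin n → ℝ)) (hP : IsSignedPoset P)
    (h : ∃ i : Fin n, ee n i ∈ P ∨ -ee n i ∈ P) :
    {x : Fin n → ℤ | (fun i => (x i : ℝ)) ∈ interior (orderPolytope P)} = ∅ ∧
    (fun _ : Fin n => (0 : ℝ)) ∈ interior (chainPolytope P) ∧
    ∃ t : ℕ, 0 < t ∧ ehrCount (orderPolytope P) t ≠ ehrCount (chainPolytope P) t := by
  obtain ⟨i, hi⟩ := h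
  obtain ⟨σ, hσ, hσi⟩ : ∃ σ : ℤ, (σ = 1 ∨ σ = -1) ∧ (σ : ℝ) • ee n i ∈ P := by
    rcases hi with hi | hi
    exacts [⟨1, Or.inl rfl, by simpa using hi⟩, ⟨-1, Or.inr rfl, by simpa using hi⟩]
  exact ⟨Set.eq_empty_of_forall_notMem (intCast_notMem_interior_orderPolytope hσ hσi),
    zero_mem_interior_chainPolytope hP i.pos, 1, one_pos,
    (ehrCount_orderPolytope_lt_chainPolytope hP hσ hσi).ne⟩
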